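/- (Sublinear convergence) Under the assumptions: f convex essentially smooth with minimizer x_min, k Legendre convex uniquely minimized at 0, ∇f(int(dom f)) ⊆ int(dom k), and D_k(∇f(y), ∇f(x)) ≤ L*·D_f(x, y) for all x, y ∈ int(dom f); if x₀ ∈ int(dom f), then the iterates x_i = x_{i−1} − (1/L*)∇k(∇f(x_{i−1})) satisfy, for all i > 0, k(∇f(x_i)) − k(0) ≤ (L*/i)·(f(x₀) − f(x_min)). In particular ∇f(x_i) → 0. -/

import Mathlib

open Filter Topology RealInnerProductSpace Classical

noncomputable section

abbrev E (d : ℕ) := EuclideanSpace ℝ (Fin d)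

def IsEssentiallySmooth {d : ℕ} (f : E d → ℝ) (S : Set (E d)) (f' : E d → E d) : Prop :=
  (interior S).Nonempty ∧
  (∀ x ∈ interior S, HasGradientAt f (f' x) x) ∧
  ∀ (u : ℕ → E d) (y : E d), (∀ n, u n ∈ interior S) → y ∈ frontier S →
    Tendsto u atTop (𝓝 y) → Tendsto (fun n => ‖f' (u n)‖) atTop atTop

def IsProperClosedConvexOn {d : ℕ} (f : E d → ℝ) (S : Set (E d)) : Prop :=
  S.Nonempty ∧ ConvexOn ℝ S f ∧
  IsClosed {p : E d × ℝ | p.1 ∈ S ∧ f p.1 ≤ p.2}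

def IsLegendre {d : ℕ} (f : E d → ℝ) (S : Set (E d)) (f' : E d → E d) : Prop :=
  IsProperClosedConvexOn f S ∧ IsEssentiallySmooth f S f' ∧
  StrictConvexOn ℝ (interior S) f

/-- The (classical) Bregman divergence `D_f(x, y) = f(x) - f(y) - ⟪∇f(y), x - y⟫`. -/
def Breg {d : ℕ} (f : E d → ℝ) (f' : E d → E d) (x y : E d) : ℝ :=
  f x - f y - ⟪f' y, x - y⟫

/-!
At `x⁺ = x - (1/L) ∇k(∇f x)`, the relative smoothness inequality `D_k(∇f x⁺, ∇f x) ≤ L D_f(x, x⁺)`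
together with the gradient inequality of `k` at `∇f x` against `0` gives
`k(∇f x⁺) - k 0 ≤ L (f x - f x⁺)`. Together with the gradient inequalities of `f` it also shows that
`k ∘ ∇f` does not increase along the segment `[x, x⁺]`. So `k(∇f xᵢ)` is nonincreasing, and summing
the per-step bounds gives `i (k(∇f xᵢ) - k 0) ≤ L (f x₀ - f xᵢ)`.

The step stays in `int dom f`: along the segment, `∇f` stays in a sublevel set of `k`, which is
bounded because a closed convex function with a unique minimiser grows linearly (by compactness of
spheres). Essential smoothness forbids reaching the boundary with bounded gradients. The same
linear growth turns `k(∇f xᵢ) → k 0` into `∇f xᵢ → 0`.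
-/

open Set

section GradientInequality

variable {F : Type*} [NormedAddCommGroup F] [InnerProductSpace ℝ F] [CompleteSpace F]

theorem ConvexOn.add_inner_sub_le_of_hasGradientAt {S : Set F} {f : F → ℝ}
    (hf : ConvexOn ℝ S f) {x y g : F} (hg : HasGradientAt f g x) (hx : x ∈ S) (hy : y ∈ S) :
    f x + ⟪g, y - x⟫ ≤ f y := by
  set ℓ : ℝ →ᵃ[ℝ] F := AffineMap.lineMap x y
  have hline : ConvexOn ℝ (ℓ ⁻¹' S) (f ∘ ℓ) := hf.comp_affineMap ℓ
  have hg' : HasFDerivAt f (InnerProductSpace.toDual ℝ F g) (ℓ 0) := by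
    simpa [ℓ] using hg.hasFDerivAt
  have hderiv : HasDerivAt (f ∘ ℓ) ⟪g, y - x⟫ 0 := by
    simpa using hg'.comp_hasDerivAt (0 : ℝ) AffineMap.hasDerivAt_lineMap
  have hℓ0 : ℓ 0 = x := AffineMap.lineMap_apply_zero x y
  have hℓ1 : ℓ 1 = y := AffineMap.lineMap_apply_one x y
  have := hline.le_slope_of_hasDerivAt (x := 0) (y := 1) (by simpa [hℓ0]) (by simpa [hℓ1])
    one_pos hderiv
  simp only [slope_def_field, Function.comp_apply, hℓ0, hℓ1, sub_zero, div_one] at this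
  linarith

end GradientInequality

section LinearGrowth

variable {F : Type*} [NormedAddCommGroup F] [ProperSpace F] {S : Set F} {k : F → ℝ}

theorem exists_pos_le_sub_of_norm_eq (hk : IsClosed {p : F × ℝ | p.1 ∈ S ∧ k p.1 ≤ p.2})
    (hmin : ∀ y ∈ S, y ≠ 0 → k 0 < k y) {s : ℝ} (hs : 0 < s) :
    ∃ c > 0, ∀ w ∈ S, ‖w‖ = s → c ≤ k w - k 0 := by
  set T : ℕ → Set F := fun n => {w | w ∈ S ∧ k w ≤ k 0 + 1 / (n + 1)}
  have hT : ∀ n, IsClosed (T n) := fun n =>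
    hk.preimage (continuous_id.prodMk continuous_const :
      Continuous fun w : F => (w, k 0 + 1 / (n + 1)))
  have hanti : Antitone T := fun n m hnm w ⟨hw, hkw⟩ =>
    ⟨hw, hkw.trans (by gcongr)⟩
  have hempty : Metric.sphere (0 : F) s ∩ ⋂ n, T n = ∅ := by
    refine eq_empty_of_forall_notMem fun w ⟨hws, hwT⟩ => ?_
    have hw0 : w ≠ 0 := ne_zero_of_mem_sphere hs.ne' ⟨w, hws⟩
    obtain ⟨n, hn⟩ := exists_nat_one_div_lt (sub_pos.mpr (hmin w (mem_iInter.mp hwT 0).1 hw0))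
    linarith [(mem_iInter.mp hwT n).2]
  obtain ⟨n, hn⟩ := (isCompact_sphere (0 : F) s).elim_directed_family_closed T hT hempty
    hanti.directed_ge
  refine ⟨1 / (n + 1), by positivity, fun w hw hws => ?_⟩
  by_contra! hlt
  exact (eq_empty_iff_forall_notMem.mp hn) w ⟨by simpa using hws, hw, by linarith⟩

variable [NormedSpace ℝ F]

theorem ConvexOn.exists_pos_mul_norm_le_sub (hconv : ConvexOn ℝ S k)
    (hk : IsClosed {p : F × ℝ | p.1 ∈ S ∧ k p.1 ≤ p.2}) (h0 : (0 : F) ∈ S)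
    (hmin : ∀ y ∈ S, y ≠ 0 → k 0 < k y) {s : ℝ} (hs : 0 < s) :
    ∃ c > 0, ∀ z ∈ S, s ≤ ‖z‖ → c * ‖z‖ ≤ k z - k 0 := by
  obtain ⟨c, hc, hsphere⟩ := exists_pos_le_sub_of_norm_eq hk hmin hs
  refine ⟨c / s, by positivity, fun z hz hsz => ?_⟩
  have hz0 : 0 < ‖z‖ := hs.trans_le hsz
  set t := s / ‖z‖
  have ht0 : 0 < t := by positivity
  have ht1 : t ≤ 1 := (div_le_one hz0).mpr hsz
  have hcomb : t • z + (1 - t) • (0 : F) = t • z := by simp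
  have htzS : t • z ∈ S :=
    hcomb ▸ hconv.1 hz h0 ht0.le (sub_nonneg.mpr ht1) (add_sub_cancel t 1)
  have htz : ‖t • z‖ = s := by
    rw [norm_smul, Real.norm_of_nonneg ht0.le, div_mul_cancel₀ _ hz0.ne']
  have hkt : k (t • z) ≤ t * k z + (1 - t) * k 0 := by
    simpa [hcomb] using hconv.2 hz h0 ht0.le (sub_nonneg.mpr ht1) (add_sub_cancel t 1)
  have key : c ≤ t * (k z - k 0) := by linarith [hsphere _ htzS htz]
  calc c / s * ‖z‖ = c / t := by simp only [t]; field_simp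
    _ ≤ k z - k 0 := by rw [div_le_iff₀ ht0]; linarith

theorem ConvexOn.exists_norm_le_of_le (hconv : ConvexOn ℝ S k)
    (hk : IsClosed {p : F × ℝ | p.1 ∈ S ∧ k p.1 ≤ p.2}) (h0 : (0 : F) ∈ S)
    (hmin : ∀ y ∈ S, y ≠ 0 → k 0 < k y) (a : ℝ) : ∃ R, ∀ z ∈ S, k z ≤ a → ‖z‖ ≤ R := by
  obtain ⟨c, hc, hgrowth⟩ := hconv.exists_pos_mul_norm_le_sub hk h0 hmin one_pos
  refine ⟨max 1 ((a - k 0) / c), fun z hz hza => ?_⟩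
  rcases le_or_gt ‖z‖ 1 with hz1 | hz1
  · exact hz1.trans (le_max_left _ _)
  · refine le_max_of_le_right ((le_div_iff₀ hc).mpr ?_)
    linarith [hgrowth z hz hz1.le]

theorem ConvexOn.tendsto_nhds_zero_of_sub_le (hconv : ConvexOn ℝ S k)
    (hk : IsClosed {p : F × ℝ | p.1 ∈ S ∧ k p.1 ≤ p.2}) (h0 : (0 : F) ∈ S)
    (hmin : ∀ y ∈ S, y ≠ 0 → k 0 < k y)
    {ι : Type*} {l : Filter ι} {z : ι → F} {u : ι → ℝ}
    (hz : ∀ i, z i ∈ S) (hu : Tendsto u l (𝓝 0)) (hzu : ∀ᶠ i in l, k (z i) - k 0 ≤ u i) :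
    Tendsto z l (𝓝 0) := by
  refine tendsto_zero_iff_norm_tendsto_zero.mpr (Metric.tendsto_nhds.mpr fun ε hε => ?_)
  obtain ⟨c, hc, hgrowth⟩ := hconv.exists_pos_mul_norm_le_sub hk h0 hmin hε
  filter_upwards [hzu, hu.eventually (gt_mem_nhds (mul_pos hc hε))] with i hi hui
  rw [Real.dist_0_eq_abs, abs_norm]
  by_contra! hεz
  nlinarith [hgrowth _ (hz i) hεz]

end LinearGrowth

theorem IsEssentiallySmooth.mem_interior_of_norm_le {d : ℕ} {f : E d → ℝ} {S : Set (E d)}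
    {f' : E d → E d} (hf : IsEssentiallySmooth f S f') {p : ℝ → E d} (hp : Continuous p)
    (h0 : p 0 ∈ interior S) {R : ℝ}
    (hR : ∀ t ∈ Icc (0 : ℝ) 1, p t ∈ interior S → ‖f' (p t)‖ ≤ R) :
    p 1 ∈ interior S := by
  set A := {t : ℝ | p t ∈ interior S}
  have hA : IsOpen A := isOpen_interior.preimage hp
  have hclosed : IsClosed (A ∩ Icc 0 1) := by
    refine isClosed_of_closure_subset fun t ht => ?_
    obtain ⟨τ, hτA, hτt⟩ := mem_closure_iff_seq_limit.mp ht
    have htI : t ∈ Icc (0 : ℝ) 1 := isClosed_Icc.mem_of_tendsto hτt (.of_forall fun n => (hτA n).2)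
    refine ⟨?_, htI⟩
    by_contra hpt
    have hpτ : Tendsto (p ∘ τ) atTop (𝓝 (p t)) := (hp.tendsto t).comp hτt
    have hfr : p t ∈ frontier S :=
      ⟨closure_mono interior_subset (mem_closure_of_tendsto hpτ (.of_forall fun n => (hτA n).1)),
        hpt⟩
    obtain ⟨n, hn⟩ := ((hf.2.2 _ _ (fun n => (hτA n).1) hfr hpτ).eventually_gt_atTop R).exists
    exact hn.not_ge (hR _ (hτA n).2 (hτA n).1)
  exact hclosed.Icc_subset_of_forall_mem_nhdsWithin h0
    (fun t ht => mem_nhdsWithin_of_mem_nhds (hA.mem_nhds ht.1)) (right_mem_Icc.mpr zero_le_one)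

def dualPrecondStep {d : ℕ} (f' k' : E d → E d) (L t : ℝ) (x : E d) : E d :=
  x - (t / L) • k' (f' x)

section DualPreconditionedStep

variable {d : ℕ} {f k : E d → ℝ} {Sf Sk : Set (E d)} {f' k' : E d → E d} {L : ℝ}

theorem sub_le_of_relSmooth (hL : L ≠ 0)
    (hrel : ∀ x ∈ interior Sf, ∀ y ∈ interior Sf, Breg k k' (f' y) (f' x) ≤ L * Breg f f' x y)
    {x : E d} (hx : x ∈ interior Sf) {t : ℝ} (hq : dualPrecondStep f' k' L t x ∈ interior Sf) :
    k (f' (dualPrecondStep f' k' L t x)) - k (f' x) ≤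
      L * (f x - f (dualPrecondStep f' k' L t x)) +
        (1 - t) * ⟪k' (f' x), f' (dualPrecondStep f' k' L t x)⟫ - ⟪k' (f' x), f' x⟫ := by
  set q := dualPrecondStep f' k' L t x
  have h := hrel x hx q hq
  have hxq : x - q = (t / L) • k' (f' x) := sub_sub_cancel x _
  simp only [Breg, hxq, inner_smul_right, inner_sub_right, real_inner_comm (k' (f' x)) (f' q)] at h
  have : L * (t / L * ⟪k' (f' x), f' q⟫) = t * ⟪k' (f' x), f' q⟫ := by field_simp
  linarith

theorem comp_grad_dualPrecondStep_le (hL : 0 < L) (hf : ConvexOn ℝ Sf f)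
    (hgrad : ∀ x ∈ interior Sf, HasGradientAt f (f' x) x)
    (hrel : ∀ x ∈ interior Sf, ∀ y ∈ interior Sf, Breg k k' (f' y) (f' x) ≤ L * Breg f f' x y)
    {x : E d} (hx : x ∈ interior Sf) {t : ℝ} (ht0 : 0 ≤ t) (ht1 : t ≤ 1)
    (hq : dualPrecondStep f' k' L t x ∈ interior Sf) :
    k (f' (dualPrecondStep f' k' L t x)) ≤ k (f' x) := by
  rcases ht0.eq_or_lt with rfl | ht0
  · simp [dualPrecondStep]
  set q := dualPrecondStep f' k' L t x
  set g := k' (f' x)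
  have hbound := sub_le_of_relSmooth hL.ne' hrel hx hq
  have hxq : f x + ⟪f' x, q - x⟫ ≤ f q :=
    hf.add_inner_sub_le_of_hasGradientAt (hgrad x hx) (interior_subset hx) (interior_subset hq)
  have hqx : f q + ⟪f' q, x - q⟫ ≤ f x :=
    hf.add_inner_sub_le_of_hasGradientAt (hgrad q hq) (interior_subset hq) (interior_subset hx)
  have hxq' : x - q = (t / L) • g := sub_sub_cancel x _
  rw [← neg_sub, hxq', inner_neg_right, inner_smul_right, real_inner_comm] at hxq
  rw [hxq', inner_smul_right, real_inner_comm] at hqx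
  -- monotonicity of `∇f` along the segment
  have hmono : ⟪g, f' q⟫ ≤ ⟪g, f' x⟫ := by
    have : t / L * ⟪g, f' q⟫ ≤ t / L * ⟪g, f' x⟫ := by linarith
    exact le_of_mul_le_mul_left this (by positivity)
  have hfx : L * (f x - f q) ≤ t * ⟪g, f' x⟫ := by
    have : L * (t / L * ⟪g, f' x⟫) = t * ⟪g, f' x⟫ := by field_simp
    nlinarith
  nlinarith [mul_le_mul_of_nonneg_left hmono (sub_nonneg.mpr ht1)]

theorem comp_grad_dualPrecondStep_sub_le (hL : L ≠ 0)
    (hrel : ∀ x ∈ interior Sf, ∀ y ∈ interior Sf, Breg k k' (f' y) (f' x) ≤ L * Breg f f' x y)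
    (hk : ConvexOn ℝ Sk k) (hk0 : (0 : E d) ∈ Sk) {x : E d} (hx : x ∈ interior Sf)
    (hkx : HasGradientAt k (k' (f' x)) (f' x)) (hfx : f' x ∈ Sk)
    (hq : dualPrecondStep f' k' L 1 x ∈ interior Sf) :
    k (f' (dualPrecondStep f' k' L 1 x)) - k 0 ≤ L * (f x - f (dualPrecondStep f' k' L 1 x)) := by
  have hbound := sub_le_of_relSmooth hL hrel hx hq
  have hk0x := hk.add_inner_sub_le_of_hasGradientAt hkx hfx hk0
  rw [zero_sub, inner_neg_right] at hk0x
  linarith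

theorem dualPrecondStep_mem_interior (hL : 0 < L) (hf : IsEssentiallySmooth f Sf f')
    (hfconv : ConvexOn ℝ Sf f)
    (hrel : ∀ x ∈ interior Sf, ∀ y ∈ interior Sf, Breg k k' (f' y) (f' x) ≤ L * Breg f f' x y)
    (hk : ConvexOn ℝ Sk k) (hkepi : IsClosed {p : E d × ℝ | p.1 ∈ Sk ∧ k p.1 ≤ p.2})
    (hk0 : (0 : E d) ∈ Sk) (hk0min : ∀ y ∈ Sk, y ≠ 0 → k 0 < k y)
    (hincl : ∀ x ∈ interior Sf, f' x ∈ interior Sk) {x : E d} (hx : x ∈ interior Sf) :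
    dualPrecondStep f' k' L 1 x ∈ interior Sf := by
  obtain ⟨R, hR⟩ := hk.exists_norm_le_of_le hkepi hk0 hk0min (k (f' x))
  refine hf.mem_interior_of_norm_le (p := fun t => dualPrecondStep f' k' L t x) (R := R)
    (by unfold dualPrecondStep; fun_prop) (by simpa [dualPrecondStep] using hx) fun t ht hpt => ?_
  exact hR _ (interior_subset (hincl _ hpt))
    (comp_grad_dualPrecondStep_le hL hfconv hf.2.1 hrel hx ht.1 ht.2 hpt)

end DualPreconditionedStep

theorem nat_mul_le_sub_of_le_sub_succ {a b : ℕ → ℝ} (ha : ∀ j, a (j + 1) ≤ a j)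
    (hab : ∀ j, a (j + 1) ≤ b j - b (j + 1)) (i : ℕ) : i * a i ≤ b 0 - b i := by
  induction i with
  | zero => simp
  | succ i ih =>
    push_cast
    nlinarith [ha i, hab i]

theorem stmt14_general {d : ℕ} (f k : E d → ℝ) (Sf Sk : Set (E d)) (f' k' : E d → E d)
    (hfpc : IsProperClosedConvexOn f Sf) (hfes : IsEssentiallySmooth f Sf f')
    (hk : IsLegendre k Sk k')
    (hk0 : (0 : E d) ∈ Sk) (hk0min : ∀ y ∈ Sk, y ≠ 0 → k 0 < k y)
    (L : ℝ) (hL : 0 < L)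
    (hincl : ∀ x ∈ interior Sf, f' x ∈ interior Sk)
    (hrel : ∀ x ∈ interior Sf, ∀ y ∈ interior Sf,
      Breg k k' (f' y) (f' x) ≤ L * Breg f f' x y)
    (xmin : E d) (hmin : ∀ x ∈ Sf, f xmin ≤ f x)
    (x : ℕ → E d) (hx0 : x 0 ∈ interior Sf)
    (hiter : ∀ i : ℕ, x (i + 1) = x i - (1 / L) • k' (f' (x i))) :
    (∀ i : ℕ, 0 < i →
      k (f' (x i)) - k 0 ≤ (L / (i : ℝ)) * (f (x 0) - f xmin)) ∧
    Tendsto (fun i => f' (x i)) atTop (𝓝 0) := by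
  obtain ⟨⟨-, hkconv, hkepi⟩, ⟨-, hkgrad, -⟩, -⟩ := hk
  have hstep : ∀ i, x (i + 1) = dualPrecondStep f' k' L 1 (x i) := hiter
  have hmem : ∀ i, x i ∈ interior Sf := fun i => by
    induction i with
    | zero => exact hx0
    | succ i ih =>
      rw [hstep]
      exact dualPrecondStep_mem_interior hL hfes hfpc.2.1 hrel hkconv hkepi hk0 hk0min hincl ih
  have hgradk : ∀ i, f' (x i) ∈ interior Sk := fun i => hincl _ (hmem i)
  have hnext : ∀ i, dualPrecondStep f' k' L 1 (x i) ∈ interior Sf := fun i => hstep i ▸ hmem (i + 1)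
  have hdesc : ∀ i, k (f' (x (i + 1))) ≤ k (f' (x i)) := fun i => by
    rw [hstep]
    exact comp_grad_dualPrecondStep_le hL hfpc.2.1 hfes.2.1 hrel (hmem i) zero_le_one le_rfl
      (hnext i)
  have hdecr : ∀ i, k (f' (x (i + 1))) - k 0 ≤ L * f (x i) - L * f (x (i + 1)) := fun i => by
    rw [hstep, ← mul_sub]
    exact comp_grad_dualPrecondStep_sub_le hL.ne' hrel hkconv hk0 (hmem i)
      (hkgrad _ (hgradk i)) (interior_subset (hgradk i)) (hnext i)
  have hrate : ∀ i : ℕ, 0 < i → k (f' (x i)) - k 0 ≤ (L / (i : ℝ)) * (f (x 0) - f xmin) := by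
    intro i hi
    have htel := nat_mul_le_sub_of_le_sub_succ (a := fun j => k (f' (x j)) - k 0)
      (b := fun j => L * f (x j)) (fun j => by simpa using hdesc j) hdecr i
    have hfi := hmin _ (interior_subset (hmem i))
    rw [div_mul_eq_mul_div, le_div_iff₀ (by positivity)]
    nlinarith
  refine ⟨hrate, hkconv.tendsto_nhds_zero_of_sub_le hkepi hk0 hk0min
    (fun i => interior_subset (hgradk i)) ?_ ((eventually_gt_atTop 0).mono hrate)⟩
  simpa using (tendsto_const_div_atTop_nhds_zero_nat L).mul_const (f (x 0) - f xmin)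

/-- sublinear convergence: under the descent-lemma assumptions, with `f`
minimized at `xmin`, the dual preconditioned gradient descent iterates satisfy
`k(∇f(x_i)) - k(0) ≤ (L*/i)·(f(x₀) - f(xmin))` for all `i > 0`; in particular
`∇f(x_i) → 0`. -/
theorem stmt14 {d : ℕ} (f k : E d → ℝ) (Sf Sk : Set (E d)) (f' k' : E d → E d)
    (hfpc : IsProperClosedConvexOn f Sf) (hfes : IsEssentiallySmooth f Sf f')
    (hk : IsLegendre k Sk k')
    (hk0 : (0 : E d) ∈ Sk) (hk0min : ∀ y ∈ Sk, y ≠ 0 → k 0 < k y)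
    (L : ℝ) (hL : 0 < L)
    (hincl : ∀ x ∈ interior Sf, f' x ∈ interior Sk)
    (hrel : ∀ x ∈ interior Sf, ∀ y ∈ interior Sf,
      Breg k k' (f' y) (f' x) ≤ L * Breg f f' x y)
    (xmin : E d) (hxmin : xmin ∈ Sf) (hmin : ∀ x ∈ Sf, f xmin ≤ f x)
    (x : ℕ → E d) (hx0 : x 0 ∈ interior Sf)
    (hiter : ∀ i : ℕ, x (i + 1) = x i - (1 / L) • k' (f' (x i))) :
    (∀ i : ℕ, 0 < i →
      k (f' (x i)) - k 0 ≤ (L / (i : ℝ)) * (f (x 0) - f xmin)) ∧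
    Tendsto (fun i => f' (x i)) atTop (𝓝 0) :=
  stmt14_general f k Sf Sk f' k' hfpc hfes hk hk0 hk0min L hL hincl hrel xmin hmin x hx0 hiter
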